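/- An n×n alternating sign matrix A whose X-ray equals (1,0,1,0,…,0,1) (alternating ones and zeros) must be the identity matrix. -/

import Mathlib

/-!
Induct on the antidiagonals `i + j + 1 = k`. If `A` agrees with the identity on all earlier
antidiagonals, then an off-diagonal entry `A a b` with `a < b` is the first nonzero entry of
row `a` after the `1` at `A a a`, so alternation forces `A a b ≤ 0`; symmetrically for `a > b`
via columns. Hence `A ≤ 1` entrywise on the `k`-th antidiagonal, and since both have the same
antidiagonal sum, `A = 1` there.
-/

open Finset Matrix

/-- An alternating sign matrix: entries in {-1,0,1}, all row and column sums
equal 1, and consecutive nonzero entries in each row and column have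
opposite signs. -/
def IsASM {n : ℕ} (A : Matrix (Fin n) (Fin n) ℤ) : Prop :=
  (∀ i j, A i j = -1 ∨ A i j = 0 ∨ A i j = 1) ∧
  (∀ i, ∑ j, A i j = 1) ∧
  (∀ j, ∑ i, A i j = 1) ∧
  (∀ i (j₁ j₂ : Fin n), j₁ < j₂ → A i j₁ ≠ 0 → A i j₂ ≠ 0 →
    (∀ j, j₁ < j → j < j₂ → A i j = 0) → A i j₂ = -A i j₁) ∧
  (∀ j (i₁ i₂ : Fin n), i₁ < i₂ → A i₁ j ≠ 0 → A i₂ j ≠ 0 →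
    (∀ i, i₁ < i → i < i₂ → A i j = 0) → A i₂ j = -A i₁ j)

/-- The `k`-th antidiagonal sum (1-based: cells `(i,j)` with `i+j = k+1`,
i.e. `0`-based indices with `i+j+1 = k`), for `k = 1, …, 2n-1`. -/
def xray {n : ℕ} (A : Matrix (Fin n) (Fin n) ℤ) (k : ℕ) : ℤ :=
  ∑ i : Fin n, ∑ j : Fin n, if (i : ℕ) + (j : ℕ) + 1 = k then A i j else 0

/-- `A` is the unique ASM with its X-ray. -/
def DeterminedByXray {n : ℕ} (A : Matrix (Fin n) (Fin n) ℤ) : Prop :=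
  ∀ B : Matrix (Fin n) (Fin n) ℤ, IsASM B → (∀ k, xray B k = xray A k) → B = A

/-- The permutation matrix of `σ`. -/
def permMatrix {n : ℕ} (σ : Equiv.Perm (Fin n)) : Matrix (Fin n) (Fin n) ℤ :=
  fun i j => if σ j = i then 1 else 0

theorem xray_one {n k : ℕ} (hk1 : 1 ≤ k) (hk2 : k ≤ 2 * n - 1) :
    xray (1 : Matrix (Fin n) (Fin n) ℤ) k = if Odd k then 1 else 0 := by
  have diag (i : Fin n) : ∑ j : Fin n, (if (i : ℕ) + j + 1 = k then (1 : Matrix _ _ ℤ) i j else 0)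
      = if 2 * (i : ℕ) + 1 = k then 1 else 0 := by
    rw [Fintype.sum_eq_single i fun j hj => by simp [one_apply_ne' hj]]
    simp [two_mul]
  simp only [xray, diag]
  split_ifs with hk
  · obtain ⟨m, rfl⟩ := hk
    rw [Fintype.sum_eq_single ⟨m, by omega⟩ fun i hi => if_neg fun h => hi (Fin.ext (by simp; omega))]
    simp
  · exact sum_eq_zero fun i _ => if_neg fun h => hk ⟨i, by omega⟩

namespace IsASM

variable {n : ℕ} {A : Matrix (Fin n) (Fin n) ℤ}

theorem transpose (hA : IsASM A) : IsASM Aᵀ := by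
  obtain ⟨hrange, hrow, hcol, hrowalt, hcolalt⟩ := hA
  exact ⟨fun i j => hrange j i, hcol, hrow, hcolalt, hrowalt⟩

theorem apply_le_one (hA : IsASM A) (i j : Fin n) : A i j ≤ 1 := by
  rcases hA.1 i j with h | h | h <;> omega

theorem apply_nonpos_of_eq_one_left (hA : IsASM A) {a c b : Fin n} (hcb : c < b)
    (hc : A a c = 1) (hzero : ∀ j, c < j → j < b → A a j = 0) : A a b ≤ 0 := by
  obtain ⟨hrange, -, -, hrowalt, -⟩ := hA
  rcases hrange a b with h | h | h
  · omega
  · omega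
  · have := hrowalt a c b hcb (by omega) (by omega) hzero
    omega

theorem apply_nonpos_of_lt (hA : IsASM A) {a b : Fin n} (hab : a < b)
    (hlow : ∀ i j : Fin n, (i : ℕ) + j < a + b → A i j = (1 : Matrix _ _ ℤ) i j) :
    A a b ≤ 0 := by
  refine hA.apply_nonpos_of_eq_one_left hab ?_ fun j haj _ => ?_
  · simpa using hlow a a (by omega)
  · rw [hlow a j (by omega), one_apply_ne haj.ne]

theorem apply_le_one_apply (hA : IsASM A) {a b : Fin n}
    (hlow : ∀ i j : Fin n, (i : ℕ) + j < a + b → A i j = (1 : Matrix _ _ ℤ) i j) :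
    A a b ≤ (1 : Matrix _ _ ℤ) a b := by
  rcases lt_trichotomy a b with hab | rfl | hab
  · rw [one_apply_ne hab.ne]
    exact hA.apply_nonpos_of_lt hab hlow
  · simpa using hA.apply_le_one a a
  · rw [one_apply_ne hab.ne']
    refine hA.transpose.apply_nonpos_of_lt hab fun i j h => ?_
    rw [transpose_apply, hlow j i (by omega)]
    simp only [one_apply, eq_comm]

theorem eq_one_on_antidiagonal (hA : IsASM A) {k : ℕ}
    (hk : xray A k = xray (1 : Matrix (Fin n) (Fin n) ℤ) k)
    (hlow : ∀ i j : Fin n, (i : ℕ) + j + 1 < k → A i j = (1 : Matrix _ _ ℤ) i j)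
    {a b : Fin n} (hab : (a : ℕ) + b + 1 = k) : A a b = (1 : Matrix _ _ ℤ) a b := by
  let f (B : Matrix (Fin n) (Fin n) ℤ) (p : Fin n × Fin n) : ℤ :=
    if (p.1 : ℕ) + p.2 + 1 = k then B p.1 p.2 else 0
  have hle : ∀ p ∈ univ, f A p ≤ f 1 p := by
    rintro ⟨i, j⟩ -
    dsimp only [f]
    split_ifs with h
    · exact hA.apply_le_one_apply fun i' j' h' => hlow i' j' (by omega)
    · rfl
  have hsum : ∑ p, f A p = ∑ p, f 1 p := by simpa only [xray, Fintype.sum_prod_type] using hk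
  simpa [f, hab] using (sum_eq_sum_iff_of_le hle).1 hsum (a, b) (mem_univ _)

theorem eq_one_of_xray_eq (hA : IsASM A)
    (hx : ∀ k, 1 ≤ k → k ≤ 2 * n - 1 → xray A k = xray (1 : Matrix (Fin n) (Fin n) ℤ) k) :
    A = 1 := by
  have key : ∀ k, ∀ i j : Fin n, (i : ℕ) + j + 1 = k → A i j = (1 : Matrix _ _ ℤ) i j := by
    intro k
    induction k using Nat.strong_induction_on with
    | _ k ih =>
      intro i j hij
      exact hA.eq_one_on_antidiagonal (hx k (by omega) (by omega))
        (fun i' j' h => ih _ h i' j' rfl) hij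
  ext i j
  exact key _ i j rfl

end IsASM

theorem stmt_15 {n : ℕ} (A : Matrix (Fin n) (Fin n) ℤ) (hA : IsASM A)
    (hx : ∀ k, 1 ≤ k → k ≤ 2 * n - 1 → xray A k = if Odd k then 1 else 0) :
    A = 1 :=
  hA.eq_one_of_xray_eq fun k hk1 hk2 => (hx k hk1 hk2).trans (xray_one hk1 hk2).symm
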